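/- Let α_i, β_i ∈ ℝ³ be linearly independent and let α̂, β̂ ∈ ℝ³ be linearly independent. Define R̃ᵀ as the matrix with columns (α̂/‖α_i‖, (α̂ × β̂)/‖α_i × β_i‖, (α̂ × (α̂ × β̂))/‖α_i × (α_i × β_i)‖) times R_iᵀ, and R̂ᵀ as the matrix with columns (α̂/‖α̂‖, (α̂ × β̂)/‖α̂ × β̂‖, (α̂ × (α̂ × β̂))/‖α̂ × (α̂ × β̂)‖) times R_iᵀ. Then R̂ is a special orthogonal matrix, and R̃ᵀ = R̂ᵀ · S where S := R_i · diag(‖α̂‖/‖α_i‖, ‖α̂ × β̂‖/‖α_i × β_i‖, ‖α̂ × (α̂ × β̂)‖/‖α_i × (α_i × β_i)‖) · R_iᵀ is symmetric positive semidefinite and satisfies S · S = R̃ R̃ᵀ (i.e., R̃ᵀ = R̂ᵀ (R̃ R̃ᵀ)^{1/2} is the polar decomposition of R̃ᵀ). -/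

import Mathlib

open scoped RealInnerProductSpace
open Matrix Filter

noncomputable section

/-- ℝ³ with the Euclidean norm and inner product. -/
abbrev V3 : Type := EuclideanSpace ℝ (Fin 3)

/-- Identity identification of `V3` with plain functions `Fin 3 → ℝ`. -/
def toF (v : V3) : Fin 3 → ℝ := v

/-- Identity identification of plain functions `Fin 3 → ℝ` with `V3`. -/
def toE (v : Fin 3 → ℝ) : V3 := WithLp.toLp 2 v

/-- The cross product on ℝ³. -/
def cross (v w : V3) : V3 := toE (crossProduct (toF v) (toF w))

/-- The 3×3 matrix whose columns are `v1, v2, v3`. -/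
def colMat (v1 v2 v3 : V3) : Matrix (Fin 3) (Fin 3) ℝ :=
  Matrix.of fun i j => toF (![v1, v2, v3] j) i

/-- The matrix `R_i` with columns
`αi/‖αi‖, (αi × βi)/‖αi × βi‖, (αi × (αi × βi))/‖αi × (αi × βi)‖`. -/
def Rimat (αi βi : V3) : Matrix (Fin 3) (Fin 3) ℝ :=
  colMat ((1 / ‖αi‖) • αi) ((1 / ‖cross αi βi‖) • cross αi βi)
    ((1 / ‖cross αi (cross αi βi)‖) • cross αi (cross αi βi))

/-- The matrix `R̃ᵀ` built from the estimates `α̂, β̂`. -/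
def RtildeT (αi βi ahat bhat : V3) : Matrix (Fin 3) (Fin 3) ℝ :=
  colMat ((1 / ‖αi‖) • ahat) ((1 / ‖cross αi βi‖) • cross ahat bhat)
      ((1 / ‖cross αi (cross αi βi)‖) • cross ahat (cross ahat bhat))
    * (Rimat αi βi)ᵀ

/-- The matrix `R̂ᵀ` built from the estimates `α̂, β̂`. -/
def RhatT (αi βi ahat bhat : V3) : Matrix (Fin 3) (Fin 3) ℝ :=
  colMat ((1 / ‖ahat‖) • ahat) ((1 / ‖cross ahat bhat‖) • cross ahat bhat)
      ((1 / ‖cross ahat (cross ahat bhat)‖) • cross ahat (cross ahat bhat))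
    * (Rimat αi βi)ᵀ

/-!
For linearly independent `α, β` the vectors `α, α × β, α × (α × β)` are pairwise orthogonal and
nonzero, and their triple product is `‖α × (α × β)‖² > 0`; so the normalised frame `Rimat α β` is a
rotation. With `F = Rimat α̂ β̂` the definitions give `R̂ᵀ = F R_iᵀ` and `R̃ᵀ = F D R_iᵀ`, where
`D` is the nonnegative diagonal matrix of norm ratios. This is a singular value decomposition, and
`P D Qᵀ = (P Qᵀ)(Q D Qᵀ)` is the polar decomposition of any such product.
-/

section PolarOfSVD

variable {n : Type*} [Fintype n] [DecidableEq n] {P Q : Matrix n n ℝ}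

theorem mul_diagonal_mul_transpose_eq_polar (hQ : Qᵀ * Q = 1) (d : n → ℝ) :
    P * diagonal d * Qᵀ = (P * Qᵀ) * (Q * diagonal d * Qᵀ) := by
  simp only [Matrix.mul_assoc, ← Matrix.mul_assoc Qᵀ Q, hQ, Matrix.one_mul]

theorem posSemidef_mul_diagonal_mul_transpose {d : n → ℝ} (hd : 0 ≤ d) :
    (Q * diagonal d * Qᵀ).PosSemidef := by
  simpa only [conjTranspose_eq_transpose_of_trivial] using
    (PosSemidef.diagonal hd).mul_mul_conjTranspose_same Q

theorem mul_diagonal_mul_transpose_mul_self_eq (hP : Pᵀ * P = 1) (hQ : Qᵀ * Q = 1) (d : n → ℝ) :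
    (Q * diagonal d * Qᵀ) * (Q * diagonal d * Qᵀ)
      = (P * diagonal d * Qᵀ)ᵀ * (P * diagonal d * Qᵀ) := by
  simp only [transpose_mul, transpose_transpose, diagonal_transpose, Matrix.mul_assoc,
    ← Matrix.mul_assoc Qᵀ Q, ← Matrix.mul_assoc Pᵀ P, hP, hQ, Matrix.one_mul]

theorem det_eq_one_of_orthogonal_of_det_pos (hQ : Qᵀ * Q = 1) (hpos : 0 < Q.det) :
    Q.det = 1 := by
  have hsq : Q.det * Q.det = 1 := by
    simpa only [det_mul, det_transpose, det_one] using congrArg det hQ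
  nlinarith

theorem mul_transpose_mul_transpose_eq_one (hP : Pᵀ * P = 1) (hQ : Qᵀ * Q = 1) :
    (P * Qᵀ) * (P * Qᵀ)ᵀ = 1 := by
  rw [transpose_mul, transpose_transpose, Matrix.mul_assoc, ← Matrix.mul_assoc Qᵀ, hQ,
    Matrix.one_mul, mul_eq_one_comm.mp hP]

end PolarOfSVD

theorem inner_eq_dotProduct_toF (v w : V3) : ⟪v, w⟫ = toF v ⬝ᵥ toF w := by
  simp [EuclideanSpace.inner_eq_star_dotProduct, toF, dotProduct_comm]

theorem dotProduct_toF_self (v : V3) : toF v ⬝ᵥ toF v = ‖v‖ ^ 2 := by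
  rw [← inner_eq_dotProduct_toF, real_inner_self_eq_norm_sq]

theorem toF_cross (v w : V3) : toF (cross v w) = crossProduct (toF v) (toF w) := rfl

theorem toF_smul (c : ℝ) (v : V3) : toF (c • v) = c • toF v := rfl

theorem norm_cross_sq (v w : V3) : ‖cross v w‖ ^ 2 = ‖v‖ ^ 2 * ‖w‖ ^ 2 - ⟪v, w⟫ ^ 2 := by
  rw [← dotProduct_toF_self, ← dotProduct_toF_self, ← dotProduct_toF_self,
    inner_eq_dotProduct_toF, toF_cross, cross_dot_cross, dotProduct_comm (toF w) (toF v)]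
  ring

theorem inner_cross_self_left (v w : V3) : ⟪v, cross v w⟫ = 0 := by
  rw [inner_eq_dotProduct_toF, toF_cross, dot_self_cross]

theorem inner_cross_self_right (v w : V3) : ⟪w, cross v w⟫ = 0 := by
  rw [inner_eq_dotProduct_toF, toF_cross, dot_cross_self]

theorem cross_ne_zero_of_linearIndependent {v w : V3} (h : LinearIndependent ℝ ![v, w]) :
    cross v w ≠ 0 := by
  have h' : LinearIndependent ℝ ![toF v, toF w] := by
    have e : ⇑(WithLp.linearEquiv 2 ℝ (Fin 3 → ℝ)).toLinearMap ∘ ![v, w] = ![toF v, toF w] := by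
      funext i; fin_cases i <;> rfl
    rw [← e]
    exact h.map' _ (WithLp.linearEquiv 2 ℝ (Fin 3 → ℝ)).ker
  intro h0
  exact crossProduct_ne_zero_iff_linearIndependent.mpr h' (congrArg toF h0)

theorem cross_ne_zero_of_inner_eq_zero {v w : V3} (hv : v ≠ 0) (hw : w ≠ 0) (h : ⟪v, w⟫ = 0) :
    cross v w ≠ 0 := by
  intro h0
  have := norm_cross_sq v w
  simp [h0, h, hv, hw] at this

theorem div_smul_one_div_smul {M : Type*} [AddCommGroup M] [Module ℝ M] {x : ℝ} (hx : x ≠ 0)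
    (y : ℝ) (v : M) :
    (x / y) • (1 / x) • v = (1 / y) • v := by
  rw [smul_smul]
  congr 1
  field_simp

theorem orthonormal_inv_norm_smul {ι E : Type*} [NormedAddCommGroup E] [InnerProductSpace ℝ E]
    {v : ι → E} (hv : ∀ i, v i ≠ 0) (horth : Pairwise fun i j => ⟪v i, v j⟫ = 0) :
    Orthonormal ℝ fun i => ‖v i‖⁻¹ • v i :=
  ⟨fun i => norm_smul_inv_norm (hv i), fun _ _ hij => by
    simp only [inner_smul_left, inner_smul_right, horth hij, mul_zero]⟩

theorem transpose_colMat_mul_colMat {u : Fin 3 → V3} (hu : Orthonormal ℝ u) :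
    (colMat (u 0) (u 1) (u 2))ᵀ * colMat (u 0) (u 1) (u 2) = 1 := by
  have hcol : ![u 0, u 1, u 2] = u := by funext i; fin_cases i <;> rfl
  ext i j
  have := orthonormal_iff_ite.mp hu i j
  simp only [inner_eq_dotProduct_toF, dotProduct] at this
  simp [colMat, Matrix.mul_apply, hcol, this, Matrix.one_apply]

theorem det_colMat (u v w : V3) :
    (colMat u v w).det = toF u ⬝ᵥ crossProduct (toF v) (toF w) := by
  rw [triple_product_eq_det, ← det_transpose]
  congr 1
  ext i j
  fin_cases i <;> rfl

theorem colMat_mul_diagonal (u v w : V3) (d : Fin 3 → ℝ) :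
    colMat u v w * diagonal d = colMat (d 0 • u) (d 1 • v) (d 2 • w) := by
  ext i j
  rw [mul_diagonal]
  fin_cases j <;> simp [colMat, toF_smul, mul_comm]

section Frame

def orthoFrame (α β : V3) : Fin 3 → V3 := ![α, cross α β, cross α (cross α β)]

def unitFrame (α β : V3) (i : Fin 3) : V3 := ‖orthoFrame α β i‖⁻¹ • orthoFrame α β i

theorem Rimat_eq_colMat_unitFrame (α β : V3) :
    Rimat α β = colMat (unitFrame α β 0) (unitFrame α β 1) (unitFrame α β 2) := by
  simp only [Rimat, unitFrame, orthoFrame, one_div]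
  rfl

variable {α β : V3}

theorem frame_ne_zero (h : LinearIndependent ℝ ![α, β]) :
    α ≠ 0 ∧ cross α β ≠ 0 ∧ cross α (cross α β) ≠ 0 := by
  have hα : α ≠ 0 := by simpa using h.ne_zero 0
  have hαβ := cross_ne_zero_of_linearIndependent h
  exact ⟨hα, hαβ, cross_ne_zero_of_inner_eq_zero hα hαβ (inner_cross_self_left α β)⟩

theorem orthoFrame_ne_zero (h : LinearIndependent ℝ ![α, β]) (i : Fin 3) :
    orthoFrame α β i ≠ 0 := by
  obtain ⟨h0, h1, h2⟩ := frame_ne_zero h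
  fin_cases i <;> assumption

theorem orthoFrame_pairwise_inner_eq_zero (α β : V3) :
    Pairwise fun i j => ⟪orthoFrame α β i, orthoFrame α β j⟫ = 0 := by
  intro i j hij
  fin_cases i <;> fin_cases j <;>
    simp_all [orthoFrame, inner_cross_self_left, inner_cross_self_right, real_inner_comm]

theorem transpose_Rimat_mul_Rimat (h : LinearIndependent ℝ ![α, β]) :
    (Rimat α β)ᵀ * Rimat α β = 1 := by
  rw [Rimat_eq_colMat_unitFrame]
  exact transpose_colMat_mul_colMat
    (orthonormal_inv_norm_smul (orthoFrame_ne_zero h) (orthoFrame_pairwise_inner_eq_zero α β))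

theorem det_Rimat (h : LinearIndependent ℝ ![α, β]) : (Rimat α β).det = 1 := by
  refine det_eq_one_of_orthogonal_of_det_pos (transpose_Rimat_mul_Rimat h) ?_
  obtain ⟨h0, h1, h2⟩ := frame_ne_zero h
  have htriple : toF α ⬝ᵥ crossProduct (toF (cross α β)) (toF (cross α (cross α β)))
      = ‖cross α (cross α β)‖ ^ 2 := by
    rw [triple_product_permutation, triple_product_permutation, ← toF_cross, dotProduct_toF_self]
  rw [Rimat, det_colMat]
  simp only [toF_smul, map_smul, LinearMap.smul_apply, smul_dotProduct, dotProduct_smul,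
    smul_eq_mul, htriple]
  positivity

end Frame

theorem RtildeT_eq_Rimat_mul_diagonal_mul_transpose (αi βi : V3) {ahat bhat : V3}
    (hhat : LinearIndependent ℝ ![ahat, bhat]) :
    RtildeT αi βi ahat bhat
      = Rimat ahat bhat
          * diagonal ![‖ahat‖ / ‖αi‖, ‖cross ahat bhat‖ / ‖cross αi βi‖,
              ‖cross ahat (cross ahat bhat)‖ / ‖cross αi (cross αi βi)‖]
          * (Rimat αi βi)ᵀ := by
  obtain ⟨h0, h1, h2⟩ := frame_ne_zero hhat
  rw [RtildeT]
  congr 1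
  rw [Rimat, colMat_mul_diagonal]
  simp only [Matrix.cons_val_zero, Matrix.cons_val_one, Matrix.cons_val_two, Matrix.head_cons,
    Matrix.tail_cons, div_smul_one_div_smul (norm_ne_zero_iff.mpr h0),
    div_smul_one_div_smul (norm_ne_zero_iff.mpr h1),
    div_smul_one_div_smul (norm_ne_zero_iff.mpr h2)]

/-- Polar decomposition of `R̃ᵀ`: `R̂` is special orthogonal, `R̃ᵀ = R̂ᵀ S` with
`S` symmetric positive semidefinite and `S² = R̃ R̃ᵀ`. -/
theorem Rtilde_polar_decomposition
    (αi βi : V3) (hind : LinearIndependent ℝ ![αi, βi])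
    (ahat bhat : V3) (hindhat : LinearIndependent ℝ ![ahat, bhat]) :
    ((RhatT αi βi ahat bhat)ᵀ)ᵀ * (RhatT αi βi ahat bhat)ᵀ = 1 ∧
    ((RhatT αi βi ahat bhat)ᵀ).det = 1 ∧
    RtildeT αi βi ahat bhat
      = RhatT αi βi ahat bhat
          * (Rimat αi βi
              * Matrix.diagonal
                  ![‖ahat‖ / ‖αi‖,
                    ‖cross ahat bhat‖ / ‖cross αi βi‖,
                    ‖cross ahat (cross ahat bhat)‖ / ‖cross αi (cross αi βi)‖]
              * (Rimat αi βi)ᵀ) ∧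
    (Rimat αi βi
        * Matrix.diagonal
            ![‖ahat‖ / ‖αi‖,
              ‖cross ahat bhat‖ / ‖cross αi βi‖,
              ‖cross ahat (cross ahat bhat)‖ / ‖cross αi (cross αi βi)‖]
        * (Rimat αi βi)ᵀ).PosSemidef ∧
    (Rimat αi βi
        * Matrix.diagonal
            ![‖ahat‖ / ‖αi‖,
              ‖cross ahat bhat‖ / ‖cross αi βi‖,
              ‖cross ahat (cross ahat bhat)‖ / ‖cross αi (cross αi βi)‖]
        * (Rimat αi βi)ᵀ)
      * (Rimat αi βi
          * Matrix.diagonal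
              ![‖ahat‖ / ‖αi‖,
                ‖cross ahat bhat‖ / ‖cross αi βi‖,
                ‖cross ahat (cross ahat bhat)‖ / ‖cross αi (cross αi βi)‖]
          * (Rimat αi βi)ᵀ)
      = (RtildeT αi βi ahat bhat)ᵀ * RtildeT αi βi ahat bhat := by
  have hRi := transpose_Rimat_mul_Rimat hind
  have hRhat := transpose_Rimat_mul_Rimat hindhat
  have hRhatT : RhatT αi βi ahat bhat = Rimat ahat bhat * (Rimat αi βi)ᵀ := rfl
  rw [RtildeT_eq_Rimat_mul_diagonal_mul_transpose αi βi hindhat, hRhatT]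
  refine ⟨?_, ?_, mul_diagonal_mul_transpose_eq_polar hRi _,
    posSemidef_mul_diagonal_mul_transpose ?_, mul_diagonal_mul_transpose_mul_self_eq hRhat hRi _⟩
  · rw [transpose_transpose]
    exact mul_transpose_mul_transpose_eq_one hRhat hRi
  · rw [det_transpose, det_mul, det_transpose, det_Rimat hind, det_Rimat hindhat, mul_one]
  · intro i
    fin_cases i <;> dsimp <;> positivity
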